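/- Let $w = abcacb$ over the alphabet $\{a,b,c\}$. If $x \cdot w^m \cdot y = w^{\ell}$ for words $x, y$ and integers $m \geq 1$, $\ell \geq 0$, then there exist integers $r, s \geq 0$ with $x = w^r$ and $y = w^s$ (in particular $r + m + s = \ell$). -/
import Mathlib

/-- `k`-fold concatenation of a word. -/
def wpow {A : Type*} (u : List A) (k : ℕ) : List A := (List.replicate k u).flatten

lemma wpow_succ {A : Type*} (u : List A) (k : ℕ) : wpow u (k+1) = u ++ wpow u k := by
  rw [wpow, List.replicate_succ, List.flatten_cons]; rfl

lemma wpow_add {A : Type*} (u : List A) (p q : ℕ) :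
    wpow u (p+q) = wpow u p ++ wpow u q := by
  rw [wpow, wpow, wpow, List.replicate_add, List.flatten_append]

lemma wpow_length {A : Type*} (u : List A) (k : ℕ) :
    (wpow u k).length = k * u.length := by
  induction k with
  | zero => simp [wpow]
  | succ n ih => rw [wpow_succ]; simp [ih]; ring

lemma wpow_getElem? {A : Type*} (u : List A) (l n : ℕ) (h : n < l * u.length) :
    (wpow u l)[n]? = u[n % u.length]? := by
  induction l generalizing n with
  | zero => simp at h
  | succ k ih =>
    rw [wpow_succ]
    by_cases hn : n < u.length
    · rw [List.getElem?_append_left hn, Nat.mod_eq_of_lt hn]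
    · push_neg at hn
      obtain ⟨j, rfl⟩ : ∃ j, n = u.length + j := ⟨n - u.length, by omega⟩
      rw [List.getElem?_append_right (by omega)]
      have : u.length + j - u.length = j := by omega
      rw [this, ih j (by nlinarith), Nat.add_mod_left]

theorem stmt6 {A : Type*} (a b c : A)
    (hab : a ≠ b) (hac : a ≠ c) (hbc : b ≠ c)
    (x y : List A) (m l : ℕ) (hm : 1 ≤ m)
    (h : x ++ wpow [a, b, c, a, c, b] m ++ y = wpow [a, b, c, a, c, b] l) :
    ∃ r s : ℕ, x = wpow [a, b, c, a, c, b] r ∧ y = wpow [a, b, c, a, c, b] s ∧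
      r + m + s = l := by
  set w : List A := [a, b, c, a, c, b] with hw
  have hwl : w.length = 6 := rfl
  have hlen : x.length + (m * 6 + y.length) = l * 6 := by
    have := congrArg List.length h
    simpa [wpow_length, hwl] using this
  -- decompose wpow w m
  obtain ⟨m', rfl⟩ : ∃ m', m = m' + 1 := ⟨m - 1, by omega⟩
  have hdec : wpow w l = x ++ (w ++ (wpow w m' ++ y)) := by
    rw [← h, wpow_succ]; simp
  have key : ∀ i, i < 6 → (w[(x.length + i) % 6]? = w[i]?) := by
    intro i hi
    have h1 : (wpow w l)[x.length + i]? = w[(x.length + i) % 6]? := by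
      rw [wpow_getElem? w l _ (by rw [hwl]; omega), hwl]
    have h2 : (wpow w l)[x.length + i]? = w[i]? := by
      rw [hdec, List.getElem?_append_right (by omega)]
      have : x.length + i - x.length = i := by omega
      rw [this, List.getElem?_append_left (by omega)]
    rw [← h1, h2]
  have hx6 : x.length % 6 = 0 := by
    have h0 := key 0 (by norm_num)
    have h1 := key 1 (by norm_num)
    have hm6 : x.length % 6 < 6 := Nat.mod_lt _ (by norm_num)
    set p := x.length % 6 with hp
    interval_cases p
    · rfl
    · rw [show (x.length + 0) % 6 = 1 by omega] at h0
      simp [hw] at h0; exact absurd h0.symm hab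
    · rw [show (x.length + 0) % 6 = 2 by omega] at h0
      simp [hw] at h0; exact absurd h0.symm hac
    · rw [show (x.length + 1) % 6 = 4 by omega] at h1
      simp [hw] at h1; exact absurd h1.symm hbc
    · rw [show (x.length + 0) % 6 = 4 by omega] at h0
      simp [hw] at h0; exact absurd h0.symm hac
    · rw [show (x.length + 0) % 6 = 5 by omega] at h0
      simp [hw] at h0; exact absurd h0.symm hab
  obtain ⟨r, hr⟩ : ∃ r, x.length = r * 6 := ⟨x.length / 6, by omega⟩
  have hrl : r + (m' + 1) ≤ l := by omega
  -- x = wpow w r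
  have hxpre : x <+: wpow w l := ⟨wpow w (m' + 1) ++ y, by rw [← h]; simp⟩
  have hwr_pre : wpow w r <+: wpow w l := by
    obtain ⟨t, ht⟩ : ∃ t, l = r + t := ⟨l - r, by omega⟩
    rw [ht, wpow_add]; exact ⟨wpow w t, rfl⟩
  have hxr : x = wpow w r := by
    have e1 : x = (wpow w l).take x.length := List.prefix_iff_eq_take.mp hxpre
    have e2 : wpow w r = (wpow w l).take x.length := by
      rw [show x.length = (wpow w r).length by rw [wpow_length, hwl, hr]]
      exact List.prefix_iff_eq_take.mp hwr_pre
    rw [e1, ← e2]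
  refine ⟨r, l - (r + (m' + 1)), hxr, ?_, by omega⟩
  have e4 : wpow w (r + (m' + 1)) ++ y = wpow w l := by
    rw [wpow_add w r (m' + 1), ← h, hxr, List.append_assoc]
  have e5 : wpow w (r + (m' + 1)) ++ wpow w (l - (r + (m' + 1))) = wpow w l := by
    rw [← wpow_add, show r + (m' + 1) + (l - (r + (m' + 1))) = l by omega]
  exact List.append_cancel_left (e4.trans e5.symm)
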